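/- arXiv:2410.17043 — 6 statements merged into one kernel-verified Lean document; each statement's English description precedes it below -/
import Mathlib

section
/- Let n ≥ 1 and let D be an n×n matrix with nonnegative real entries, and let b = max( max over rows i of the i-th row sum of D, max over columns j of the j-th column sum of D ). Then there exist finitely many nonnegative reals λ_1,…,λ_m and subpermutation matrices M_1,…,M_m such that D = ∑_{k=1}^m λ_k · M_k and ∑_{k=1}^m λ_k = b. -/
/-- A subpermutation matrix: entries in {0,1}, at most one 1 in each row and column. -/
def IsSubPermMatrix {n : ℕ} (M : Matrix (Fin n) (Fin n) ℝ) : Prop :=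
  (∀ i j, M i j = 0 ∨ M i j = 1) ∧ (∀ i, ∑ j, M i j ≤ 1) ∧ (∀ j, ∑ i, M i j ≤ 1)

/-!
Pad `D` to the `2n × 2n` matrix `[[D, diag (b - row sums)], [diag (b - column sums), Dᵀ]]`.
It is nonnegative because every line sum of `D` is at most `b`, and all its line sums equal `b`,
so it is `b` times a doubly stochastic matrix. Birkhoff's theorem writes it as a nonnegative
combination of permutation matrices with weights summing to `b`; reading off the top-left block
expresses `D` with the same weights through the top-left blocks of those permutation matrices,
which are subpermutation matrices.
-/

open Finset Matrix

variable {R α : Type*} [Fintype α] [DecidableEq α]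

theorem exists_eq_sum_smul_permMatrix_of_sum_eq [Field R] [LinearOrder R] [IsStrictOrderedRing R]
    {M : Matrix α α R} {s : R} (hs : 0 ≤ s) (hM : ∀ i j, 0 ≤ M i j)
    (hrow : ∀ i, ∑ j, M i j = s) (hcol : ∀ j, ∑ i, M i j = s) :
    ∃ w : Equiv.Perm α → R, (∀ σ, 0 ≤ w σ) ∧ ∑ σ, w σ = s ∧
      M = ∑ σ, w σ • σ.permMatrix R := by
  obtain ⟨N, hN, rfl⟩ := (exists_mem_doublyStochastic_eq_smul_iff hs).2 ⟨hM, hrow, hcol⟩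
  obtain ⟨w, hw0, hw1, rfl⟩ := exists_eq_sum_perm_of_mem_doublyStochastic hN
  exact ⟨fun σ => s * w σ, fun σ => mul_nonneg hs (hw0 σ), by rw [← mul_sum, hw1, mul_one],
    by simp only [smul_sum, smul_smul]⟩

def Matrix.dilation [Ring R] (D : Matrix α α R) (b : R) : Matrix (α ⊕ α) (α ⊕ α) R :=
  fromBlocks D (diagonal fun i => b - ∑ j, D i j) (diagonal fun j => b - ∑ i, D i j) Dᵀ

section Dilation

variable [Ring R] (D : Matrix α α R) (b : R)

theorem Matrix.sum_dilation_row (p : α ⊕ α) : ∑ q, D.dilation b p q = b := by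
  rcases p with i | i <;> simp [dilation, Fintype.sum_sum_type, diagonal_apply]

theorem Matrix.sum_dilation_col (q : α ⊕ α) : ∑ p, D.dilation b p q = b := by
  rcases q with j | j <;> simp [dilation, Fintype.sum_sum_type, diagonal_apply]

theorem Matrix.dilation_nonneg [PartialOrder R] [IsOrderedRing R] (hD : ∀ i j, 0 ≤ D i j)
    (hrow : ∀ i, ∑ j, D i j ≤ b) (hcol : ∀ j, ∑ i, D i j ≤ b) (p q : α ⊕ α) :
    0 ≤ D.dilation b p q := by
  rcases p with i | i <;> rcases q with j | j <;>
    simp [dilation, diagonal_apply, apply_ite, hD, hrow, hcol]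

end Dilation

theorem exists_eq_sum_smul_submatrix_permMatrix [Field R] [LinearOrder R] [IsStrictOrderedRing R]
    {D : Matrix α α R} {b : R} (hb : 0 ≤ b) (hD : ∀ i j, 0 ≤ D i j)
    (hrow : ∀ i, ∑ j, D i j ≤ b) (hcol : ∀ j, ∑ i, D i j ≤ b) :
    ∃ w : Equiv.Perm (α ⊕ α) → R, (∀ σ, 0 ≤ w σ) ∧ ∑ σ, w σ = b ∧
      D = ∑ σ, w σ • (σ.permMatrix R).submatrix Sum.inl Sum.inl := by
  obtain ⟨w, hw0, hw1, hE⟩ := exists_eq_sum_smul_permMatrix_of_sum_eq hb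
    (D.dilation_nonneg b hD hrow hcol) (D.sum_dilation_row b) (D.sum_dilation_col b)
  refine ⟨w, hw0, hw1, ?_⟩
  ext i j
  simpa [dilation, Matrix.sum_apply] using congrFun (congrFun hE (Sum.inl i)) (Sum.inl j)

theorem isSubPermMatrix_submatrix_permMatrix {κ : Type*} [Fintype κ] [DecidableEq κ] {n : ℕ}
    (σ : Equiv.Perm κ) {f : Fin n → κ} (hf : f.Injective) :
    IsSubPermMatrix ((σ.permMatrix ℝ).submatrix f f) := by
  have hP := permMatrix_mem_doublyStochastic (R := ℝ) (σ := σ)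
  have hsum (g : κ → ℝ) (hg : ∀ q, 0 ≤ g q) : ∑ j, g (f j) ≤ ∑ q, g q :=
    calc ∑ j, g (f j) = ∑ q ∈ univ.map ⟨f, hf⟩, g q := by rw [sum_map]; rfl
      _ ≤ ∑ q, g q := sum_le_univ_sum_of_nonneg hg
  refine ⟨fun i j => ?_, fun i => ?_, fun j => ?_⟩
  · simp only [submatrix_apply, Equiv.Perm.permMatrix, PEquiv.toMatrix_apply,
      Equiv.toPEquiv_apply, Option.mem_def, Option.some.injEq]
    split_ifs <;> simp
  · exact (hsum _ fun q => nonneg_of_mem_doublyStochastic hP).trans_eq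
      (sum_row_of_mem_doublyStochastic hP (f i))
  · exact (hsum _ fun q => nonneg_of_mem_doublyStochastic hP).trans_eq
      (sum_col_of_mem_doublyStochastic hP (f j))

theorem decomposition_achieving_bmax (n : ℕ) (hn : 1 ≤ n)
    (D : Matrix (Fin n) (Fin n) ℝ) (hD : ∀ i j, 0 ≤ D i j)
    (b : ℝ)
    (hb : b = max
      (Finset.univ.sup' (Finset.univ_nonempty_iff.mpr ⟨⟨0, hn⟩⟩) fun i => ∑ j, D i j)
      (Finset.univ.sup' (Finset.univ_nonempty_iff.mpr ⟨⟨0, hn⟩⟩) fun j => ∑ i, D i j)) :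
    ∃ (m : ℕ) (lam : Fin m → ℝ) (M : Fin m → Matrix (Fin n) (Fin n) ℝ),
      (∀ k, 0 ≤ lam k) ∧ (∀ k, IsSubPermMatrix (M k)) ∧
      D = ∑ k, lam k • M k ∧ ∑ k, lam k = b := by
  have hrow (i : Fin n) : ∑ j, D i j ≤ b :=
    hb ▸ le_max_of_le_left (le_sup' (fun i => ∑ j, D i j) (mem_univ i))
  have hcol (j : Fin n) : ∑ i, D i j ≤ b :=
    hb ▸ le_max_of_le_right (le_sup' (fun j => ∑ i, D i j) (mem_univ j))
  have hb0 : 0 ≤ b := (sum_nonneg fun j _ => hD ⟨0, hn⟩ j).trans (hrow ⟨0, hn⟩)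
  obtain ⟨w, hw0, hw1, hDw⟩ := exists_eq_sum_smul_submatrix_permMatrix hb0 hD hrow hcol
  let e := (Fintype.equivFin (Equiv.Perm (Fin n ⊕ Fin n))).symm
  refine ⟨_, w ∘ e, fun k => ((e k).permMatrix ℝ).submatrix Sum.inl Sum.inl, fun k => hw0 _,
    fun k => isSubPermMatrix_submatrix_permMatrix _ Sum.inl_injective, ?_, ?_⟩
  · rw [hDw, ← e.sum_comp]
    rfl
  · rw [← hw1, ← e.sum_comp]
    rfl
end

section
/- Let n ≥ 1 and let D be an n×n matrix with nonnegative real entries, and let b = max( max over rows i of the i-th row sum of D, max over columns j of the j-th column sum of D ). Then there exists an n×n matrix X with nonnegative real entries such that every row sum and every column sum of D + X equals b. (Step 1 of the proof of Theorem 4.2: the traffic matrix can be completed to a doubly balanced matrix by adding artificial traffic.) -/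
open Finset

/-!
The deficits `b - (row sum)` and `b - (column sum)` are nonnegative by the choice of `b`, and both
add up to `n * b - ∑ D`. Nonnegative margins with a common total `t` are realized by the rank-one
matrix `u i * v j / t`, so adding it to `D` fills every row and column up to `b`.
-/

theorem exists_nonneg_matrix_with_margins {ι κ : Type*} [Fintype ι] [Fintype κ]
    (u : ι → ℝ) (v : κ → ℝ) (hu : 0 ≤ u) (hv : 0 ≤ v) (huv : ∑ i, u i = ∑ j, v j) :
    ∃ X : Matrix ι κ ℝ, (∀ i j, 0 ≤ X i j) ∧ (∀ i, ∑ j, X i j = u i) ∧ ∀ j, ∑ i, X i j = v j := by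
  set t := ∑ i, u i with ht
  have ht_nonneg : 0 ≤ t := sum_nonneg fun i _ => hu i
  refine ⟨fun i j => u i * v j / t, fun i j => div_nonneg (mul_nonneg (hu i) (hv j)) ht_nonneg,
    fun i => ?_, fun j => ?_⟩
  -- If `t = 0` all margins vanish, so the junk value `x / 0 = 0` is still the right entry.
  · rcases eq_or_ne t 0 with h0 | h0
    · have hui : u i = 0 := (sum_eq_zero_iff_of_nonneg fun i _ => hu i).1 h0 i (mem_univ i)
      simp [hui]
    · rw [← sum_div, ← mul_sum, ← huv, mul_div_cancel_right₀ _ h0]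
  · rcases eq_or_ne t 0 with h0 | h0
    · have hvj : v j = 0 :=
        (sum_eq_zero_iff_of_nonneg fun j _ => hv j).1 (huv ▸ h0) j (mem_univ j)
      simp [hvj]
    · rw [← sum_div, ← sum_mul, ← ht, mul_div_cancel_left₀ _ h0]

theorem complete_to_doubly_balanced_general (n : ℕ) (hn : 1 ≤ n)
    (D : Matrix (Fin n) (Fin n) ℝ)
    (b : ℝ)
    (hb : b = max
      (Finset.univ.sup' (Finset.univ_nonempty_iff.mpr ⟨⟨0, hn⟩⟩) fun i => ∑ j, D i j)
      (Finset.univ.sup' (Finset.univ_nonempty_iff.mpr ⟨⟨0, hn⟩⟩) fun j => ∑ i, D i j)) :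
    ∃ X : Matrix (Fin n) (Fin n) ℝ,
      (∀ i j, 0 ≤ X i j) ∧
      (∀ i, ∑ j, (D + X) i j = b) ∧
      (∀ j, ∑ i, (D + X) i j = b) := by
  have row_le : ∀ i, ∑ j, D i j ≤ b := fun i =>
    hb ▸ le_max_of_le_left (le_sup' (fun i => ∑ j, D i j) (mem_univ i))
  have col_le : ∀ j, ∑ i, D i j ≤ b := fun j =>
    hb ▸ le_max_of_le_right (le_sup' (fun j => ∑ i, D i j) (mem_univ j))
  have deficits_eq : ∑ i, (b - ∑ j, D i j) = ∑ j, (b - ∑ i, D i j) := by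
    simp only [sum_sub_distrib, sum_comm (f := fun i j => D i j)]
  obtain ⟨X, hX, hXrow, hXcol⟩ := exists_nonneg_matrix_with_margins
    (fun i => b - ∑ j, D i j) (fun j => b - ∑ i, D i j)
    (fun i => sub_nonneg.2 (row_le i)) (fun j => sub_nonneg.2 (col_le j)) deficits_eq
  refine ⟨X, hX, fun i => ?_, fun j => ?_⟩
  · simp only [Matrix.add_apply, sum_add_distrib, hXrow, add_sub_cancel]
  · simp only [Matrix.add_apply, sum_add_distrib, hXcol, add_sub_cancel]

theorem complete_to_doubly_balanced (n : ℕ) (hn : 1 ≤ n)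
    (D : Matrix (Fin n) (Fin n) ℝ) (hD : ∀ i j, 0 ≤ D i j)
    (b : ℝ)
    (hb : b = max
      (Finset.univ.sup' (Finset.univ_nonempty_iff.mpr ⟨⟨0, hn⟩⟩) fun i => ∑ j, D i j)
      (Finset.univ.sup' (Finset.univ_nonempty_iff.mpr ⟨⟨0, hn⟩⟩) fun j => ∑ i, D i j)) :
    ∃ X : Matrix (Fin n) (Fin n) ℝ,
      (∀ i j, 0 ≤ X i j) ∧
      (∀ i, ∑ j, (D + X) i j = b) ∧
      (∀ j, ∑ i, (D + X) i j = b) :=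
  complete_to_doubly_balanced_general n hn D b hb
end

section
/- Let n ≥ 1, let a : Fin n → ℝ be nonnegative and nonincreasing (a(i) ≥ a(j) whenever i ≤ j), and let s : Fin n → ℝ be strictly positive and nonincreasing (s(i) ≥ s(j) whenever i ≤ j). Then for every permutation σ of Fin n, max_{i} ( a(i) / s(i) ) ≤ max_{i} ( a(i) / s(σ(i)) ). (Theorem 5.1: sorting experts by token load in descending order and assigning them to GPUs in descending order of performance minimizes the maximum per-GPU time.) -/
/-! Each expert `i` can be matched with an expert `j ≤ i` (so at least as loaded) that `σ` sends to a
GPU `σ j ≥ i` (so at most as fast), whence `a i / s i ≤ a j / s (σ j)`. Such a `j` exists by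
pigeonhole: `σ` cannot map the `i + 1` indices `≤ i` into the `i` indices `< i`. -/

theorem Equiv.Perm.exists_le_le_apply {α : Type*} [LinearOrder α] [LocallyFiniteOrderBot α]
    (σ : Equiv.Perm α) (i : α) : ∃ j ≤ i, i ≤ σ j := by
  by_contra! h
  have hmaps : Set.MapsTo σ (Finset.Iic i) (Finset.Iio i) := fun j hj =>
    Finset.mem_Iio.mpr (h j (Finset.mem_Iic.mp hj))
  have hcard := Finset.card_le_card_of_injOn σ hmaps σ.injective.injOn
  rw [← Finset.Iio_insert, Finset.card_insert_of_notMem Finset.notMem_Iio_self] at hcard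
  omega

theorem sorted_assignment_minimizes_max_time (n : ℕ) (hn : 1 ≤ n)
    (a s : Fin n → ℝ)
    (ha0 : ∀ i, 0 ≤ a i) (ha : ∀ i j : Fin n, i ≤ j → a j ≤ a i)
    (hs0 : ∀ i, 0 < s i) (hs : ∀ i j : Fin n, i ≤ j → s j ≤ s i)
    (σ : Equiv.Perm (Fin n)) :
    (Finset.univ.sup' (Finset.univ_nonempty_iff.mpr ⟨⟨0, hn⟩⟩) fun i => a i / s i)
      ≤ Finset.univ.sup' (Finset.univ_nonempty_iff.mpr ⟨⟨0, hn⟩⟩) fun i => a i / s (σ i) := by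
  refine Finset.sup'_le _ _ fun i _ => ?_
  obtain ⟨j, hji, hij⟩ := σ.exists_le_le_apply i
  refine Finset.le_sup'_of_le _ (Finset.mem_univ j) ?_
  exact div_le_div₀ (ha0 j) (ha j i hji) (hs0 (σ j)) (hs i (σ j) hij)
end

section
/- Let n ≥ 1, let D be an n×n matrix with nonnegative real entries d_{ij}, and let B : Fin n → ℝ be strictly positive (the per-GPU bandwidths). Define the time matrix E by E_{ij} = d_{ij} / B(i), and let b = max( max over rows i of the i-th row sum of E, max over columns j of the j-th column sum of E ). Then the minimum of ∑_k λ_k over all finite decompositions E = ∑_k λ_k · M_k, where each λ_k is a nonnegative real and each M_k is a subpermutation matrix, is exactly b. (Theorem 5.2: in a heterogeneous cluster the minimum all-to-all communication time equals the longest per-GPU sending or receiving time, and the contention-free transmission order remains optimal.) -/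
open Finset Matrix Equiv

theorem exists_eq_sum_perm_of_sum_eq {R ι : Type*} [Field R] [LinearOrder R]
    [IsStrictOrderedRing R] [Fintype ι] [DecidableEq ι] {G : Matrix ι ι R} {s : R} (hs : 0 ≤ s)
    (hG : ∀ i j, 0 ≤ G i j) (hrow : ∀ i, ∑ j, G i j = s) (hcol : ∀ j, ∑ i, G i j = s) :
    ∃ w : Perm ι → R, (∀ σ, 0 ≤ w σ) ∧ ∑ σ, w σ = s ∧ ∑ σ, w σ • σ.permMatrix R = G := by
  obtain ⟨P, hP, rfl⟩ := (exists_mem_doublyStochastic_eq_smul_iff hs).2 ⟨hG, hrow, hcol⟩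
  obtain ⟨w, hw0, hw1, rfl⟩ := exists_eq_sum_perm_of_mem_doublyStochastic hP
  exact ⟨fun σ => s * w σ, fun σ => mul_nonneg hs (hw0 σ), by rw [← mul_sum, hw1, mul_one],
    by simp only [smul_sum, smul_smul]⟩

namespace Matrix

variable {α ι : Type*} [Fintype ι] [DecidableEq ι]

/-- Von Neumann's dilation: it completes a matrix with line sums at most `b` to one with all
line sums equal to `b`. -/
def stochasticDilation [AddCommGroup α] (E : Matrix ι ι α) (b : α) :
    Matrix (ι ⊕ ι) (ι ⊕ ι) α :=
  fromBlocks E (diagonal fun i => b - ∑ j, E i j) (diagonal fun j => b - ∑ i, E i j) Eᵀ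

section AddCommGroup

variable [AddCommGroup α] (E : Matrix ι ι α) (b : α)

theorem toBlocks₁₁_stochasticDilation : (stochasticDilation E b).toBlocks₁₁ = E :=
  toBlocks_fromBlocks₁₁ _ _ _ _

theorem stochasticDilation_transpose :
    (stochasticDilation E b)ᵀ = stochasticDilation Eᵀ b := by
  simp only [stochasticDilation, fromBlocks_transpose, diagonal_transpose, transpose_transpose,
    transpose_apply]

theorem sum_row_stochasticDilation (p : ι ⊕ ι) : ∑ q, stochasticDilation E b p q = b := by
  cases p <;>
    simp [stochasticDilation, Fintype.sum_sum_type, diagonal_apply]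

theorem sum_col_stochasticDilation (q : ι ⊕ ι) : ∑ p, stochasticDilation E b p q = b := by
  simpa only [← stochasticDilation_transpose, transpose_apply] using
    sum_row_stochasticDilation Eᵀ b q

end AddCommGroup

theorem stochasticDilation_nonneg [AddCommGroup α] [PartialOrder α] [IsOrderedAddMonoid α]
    {E : Matrix ι ι α} {b : α} (hE : ∀ i j, 0 ≤ E i j) (hrow : ∀ i, ∑ j, E i j ≤ b)
    (hcol : ∀ j, ∑ i, E i j ≤ b) (p q : ι ⊕ ι) : 0 ≤ stochasticDilation E b p q := by
  rcases p with i | i <;> rcases q with j | j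
  · exact hE i j
  · simp only [stochasticDilation, fromBlocks_apply₁₂, diagonal_apply]
    split_ifs
    exacts [sub_nonneg.2 (hrow i), le_rfl]
  · simp only [stochasticDilation, fromBlocks_apply₂₁, diagonal_apply]
    split_ifs
    exacts [sub_nonneg.2 (hcol i), le_rfl]
  · exact hE j i

end Matrix

theorem sum_row_sum_smul_le {R κ ι ι' : Type*} [CommSemiring R] [PartialOrder R]
    [IsOrderedRing R] [Fintype κ] [Fintype ι'] {lam : κ → R} {M : κ → Matrix ι ι' R} (hlam : ∀ k, 0 ≤ lam k) (hM : ∀ k i, ∑ j, M k i j ≤ 1) (i : ι) :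
    ∑ j, (∑ k, lam k • M k) i j ≤ ∑ k, lam k :=
  calc ∑ j, (∑ k, lam k • M k) i j = ∑ k, lam k * ∑ j, M k i j := by
        simp only [Matrix.sum_apply, Matrix.smul_apply, smul_eq_mul, mul_sum]
        exact sum_comm
    _ ≤ ∑ k, lam k := sum_le_sum fun k _ => mul_le_of_le_one_right (hlam k) (hM k i)

section SubPermMatrix

variable {n : ℕ}

theorem IsSubPermMatrix.transpose {M : Matrix (Fin n) (Fin n) ℝ} (hM : IsSubPermMatrix M) :
    IsSubPermMatrix Mᵀ :=
  ⟨fun i j => hM.1 j i, hM.2.2, hM.2.1⟩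

theorem sum_row_toBlocks₁₁_le_one_of_mem_doublyStochastic {R ι : Type*} [Semiring R]
    [PartialOrder R] [IsOrderedRing R] [Fintype ι] [DecidableEq ι] {P : Matrix (ι ⊕ ι) (ι ⊕ ι) R}
    (hP : P ∈ doublyStochastic R (ι ⊕ ι)) (i : ι) :
    ∑ j, P.toBlocks₁₁ i j ≤ 1 :=
  calc ∑ j, P.toBlocks₁₁ i j ≤ ∑ j, P (.inl i) (.inl j) + ∑ j, P (.inl i) (.inr j) :=
        le_add_of_nonneg_right (sum_nonneg fun _ _ => nonneg_of_mem_doublyStochastic hP)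
    _ = 1 := by rw [← Fintype.sum_sum_type, sum_row_of_mem_doublyStochastic hP]

theorem isSubPermMatrix_toBlocks₁₁_permMatrix (σ : Perm (Fin n ⊕ Fin n)) :
    IsSubPermMatrix (σ.permMatrix ℝ).toBlocks₁₁ := by
  have hP := permMatrix_mem_doublyStochastic (R := ℝ) (σ := σ)
  refine ⟨fun i j => ?_, sum_row_toBlocks₁₁_le_one_of_mem_doublyStochastic hP, fun j => ?_⟩
  · simp only [toBlocks₁₁, of_apply, Perm.permMatrix, PEquiv.toMatrix_apply]
    split_ifs <;> simp
  · exact sum_row_toBlocks₁₁_le_one_of_mem_doublyStochastic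
      (transpose_mem_doublyStochastic_iff.2 hP) j

def subPermDecompositionCosts (E : Matrix (Fin n) (Fin n) ℝ) : Set ℝ :=
  {t : ℝ | ∃ (m : ℕ) (lam : Fin m → ℝ) (M : Fin m → Matrix (Fin n) (Fin n) ℝ),
    (∀ k, 0 ≤ lam k) ∧ (∀ k, IsSubPermMatrix (M k)) ∧ E = ∑ k, lam k • M k ∧ t = ∑ k, lam k}

theorem sum_mem_subPermDecompositionCosts {κ : Type*} [Fintype κ] {lam : κ → ℝ}
    {M : κ → Matrix (Fin n) (Fin n) ℝ} (hlam : ∀ k, 0 ≤ lam k) (hM : ∀ k, IsSubPermMatrix (M k)) :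
    ∑ k, lam k ∈ subPermDecompositionCosts (∑ k, lam k • M k) := by
  let e := Fintype.equivFin κ
  exact ⟨Fintype.card κ, lam ∘ e.symm, M ∘ e.symm, fun k => hlam _, fun k => hM _,
    (e.symm.sum_comp fun k => lam k • M k).symm, (e.symm.sum_comp lam).symm⟩

theorem sum_row_le_of_mem_subPermDecompositionCosts {E : Matrix (Fin n) (Fin n) ℝ} {t : ℝ}
    (ht : t ∈ subPermDecompositionCosts E) (i : Fin n) : ∑ j, E i j ≤ t := by
  obtain ⟨m, lam, M, hlam, hM, rfl, rfl⟩ := ht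
  exact sum_row_sum_smul_le hlam (fun k => (hM k).2.1) i

theorem transpose_mem_subPermDecompositionCosts {E : Matrix (Fin n) (Fin n) ℝ} {t : ℝ}
    (ht : t ∈ subPermDecompositionCosts E) : t ∈ subPermDecompositionCosts Eᵀ := by
  obtain ⟨m, lam, M, hlam, hM, rfl, rfl⟩ := ht
  refine ⟨m, lam, fun k => (M k)ᵀ, hlam, fun k => (hM k).transpose, ?_, rfl⟩
  simp only [transpose_sum, transpose_smul]

theorem mem_subPermDecompositionCosts_of_sum_le {E : Matrix (Fin n) (Fin n) ℝ} {b : ℝ}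
    (hb : 0 ≤ b) (hE : ∀ i j, 0 ≤ E i j) (hrow : ∀ i, ∑ j, E i j ≤ b)
    (hcol : ∀ j, ∑ i, E i j ≤ b) : b ∈ subPermDecompositionCosts E := by
  obtain ⟨w, hw0, rfl, hw⟩ := exists_eq_sum_perm_of_sum_eq hb
    (stochasticDilation_nonneg hE hrow hcol) (sum_row_stochasticDilation E b)
    (sum_col_stochasticDilation E b)
  have hE_eq : E = ∑ σ, w σ • (σ.permMatrix ℝ).toBlocks₁₁ := by
    conv_lhs => rw [← toBlocks₁₁_stochasticDilation E (∑ σ, w σ), ← hw]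
    ext i j
    simp only [toBlocks₁₁, of_apply, Matrix.sum_apply, Matrix.smul_apply]
  rw [hE_eq]
  exact sum_mem_subPermDecompositionCosts hw0 isSubPermMatrix_toBlocks₁₁_permMatrix

theorem isLeast_subPermDecompositionCosts {E : Matrix (Fin n) (Fin n) ℝ}
    (hE : ∀ i j, 0 ≤ E i j) (hn : (univ : Finset (Fin n)).Nonempty) :
    IsLeast (subPermDecompositionCosts E)
      (max (univ.sup' hn fun i => ∑ j, E i j) (univ.sup' hn fun j => ∑ i, E i j)) := by
  set R := univ.sup' hn fun i => ∑ j, E i j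
  set C := univ.sup' hn fun j => ∑ i, E i j
  have hrow (i : Fin n) : ∑ j, E i j ≤ max R C := (le_sup' _ (mem_univ i)).trans (le_max_left R C)
  have hcol (j : Fin n) : ∑ i, E i j ≤ max R C := (le_sup' _ (mem_univ j)).trans (le_max_right R C)
  obtain ⟨i₀, -⟩ := id hn
  have hb := (sum_nonneg fun j _ => hE i₀ j).trans (hrow i₀)
  refine ⟨mem_subPermDecompositionCosts_of_sum_le hb hE hrow hcol, fun t ht => max_le ?_ ?_⟩
  · exact sup'_le _ _ fun i _ => sum_row_le_of_mem_subPermDecompositionCosts ht i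
  · exact sup'_le _ _ fun j _ =>
      sum_row_le_of_mem_subPermDecompositionCosts (transpose_mem_subPermDecompositionCosts ht) j

end SubPermMatrix

theorem min_comm_time_heterogeneous (n : ℕ) (hn : 1 ≤ n)
    (D : Matrix (Fin n) (Fin n) ℝ) (hD : ∀ i j, 0 ≤ D i j)
    (B : Fin n → ℝ) (hB : ∀ i, 0 < B i)
    (E : Matrix (Fin n) (Fin n) ℝ) (hE : ∀ i j, E i j = D i j / B i) :
    IsLeast
      {t : ℝ | ∃ (m : ℕ) (lam : Fin m → ℝ) (M : Fin m → Matrix (Fin n) (Fin n) ℝ),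
        (∀ k, 0 ≤ lam k) ∧ (∀ k, IsSubPermMatrix (M k)) ∧
        E = ∑ k, lam k • M k ∧ t = ∑ k, lam k}
      (max
        (Finset.univ.sup' (Finset.univ_nonempty_iff.mpr ⟨⟨0, hn⟩⟩) fun i => ∑ j, E i j)
        (Finset.univ.sup' (Finset.univ_nonempty_iff.mpr ⟨⟨0, hn⟩⟩) fun j => ∑ i, E i j)) :=
  isLeast_subPermDecompositionCosts (fun i j => hE i j ▸ div_nonneg (hD i j) (hB i).le) _
end

section
/- Let n ≥ 1, let D be an n×n matrix with nonnegative real entries d_{ij}, let B : Fin n → ℝ be strictly positive, and let b = max( max_i ∑_{j} d_{ij}/B(i) , max_j ∑_{i} d_{ij}/B(i) ). Then there exists an n×n matrix X with nonnegative real entries such that for every row i, ∑_{j} (d_{ij} + x_{ij})/B(i) = b, and for every column j, ∑_{i} (d_{ij} + x_{ij})/B(i) = b. (Step 1 of the proof of Theorem 5.2: the heterogeneous traffic matrix can be completed by artificial traffic so that every GPU spends exactly time b sending and receiving.) -/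
/-!
Divide row `i` by `B i`, so that `A i j = d_{ij} / B(i)` has all row and column sums at most `b`.
The deficits `δ i = b - ∑ⱼ A i j` and `ε j = b - ∑ᵢ A i j` are nonnegative with the same total
(both equal `n b - ∑ A`), so the product coupling `δ i ε j / ∑ ε` has row sums `δ` and column
sums `ε`; adding it to `A` and scaling row `i` back by `B i` gives `X`.
-/

open Finset

variable {𝕜 ι κ : Type*} [Field 𝕜] [LinearOrder 𝕜] [IsStrictOrderedRing 𝕜]
  [Fintype ι] [Fintype κ]

def productCoupling (δ : ι → 𝕜) (ε : κ → 𝕜) : Matrix ι κ 𝕜 :=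
  fun i j => δ i * ε j / ∑ k, ε k

omit [Fintype ι] in
lemma productCoupling_nonneg {δ : ι → 𝕜} {ε : κ → 𝕜} (hδ : 0 ≤ δ) (hε : 0 ≤ ε)
    (i : ι) (j : κ) : 0 ≤ productCoupling δ ε i j :=
  div_nonneg (mul_nonneg (hδ i) (hε j)) (sum_nonneg fun k _ => hε k)

lemma sum_productCoupling_row {δ : ι → 𝕜} {ε : κ → 𝕜} (hδ : 0 ≤ δ)
    (hsum : ∑ i, δ i = ∑ j, ε j) (i : ι) : ∑ j, productCoupling δ ε i j = δ i := by
  simp only [productCoupling, ← sum_div, ← mul_sum]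
  rcases eq_or_ne (∑ j, ε j) 0 with h | h
  · have hδi : δ i = 0 :=
      (sum_eq_zero_iff_of_nonneg fun k _ => hδ k).mp (hsum.trans h) i (mem_univ i)
    simp [hδi]
  · exact mul_div_cancel_right₀ _ h

lemma sum_productCoupling_col {δ : ι → 𝕜} {ε : κ → 𝕜} (hε : 0 ≤ ε)
    (hsum : ∑ i, δ i = ∑ j, ε j) (j : κ) : ∑ i, productCoupling δ ε i j = ε j := by
  simp only [productCoupling, ← sum_div, ← sum_mul, hsum]
  rcases eq_or_ne (∑ k, ε k) 0 with h | h
  · have hεj : ε j = 0 := (sum_eq_zero_iff_of_nonneg fun k _ => hε k).mp h j (mem_univ j)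
    simp [hεj]
  · exact mul_div_cancel_left₀ _ h

lemma Matrix.exists_nonneg_add_sums_eq (A : Matrix ι ι 𝕜) {b : 𝕜}
    (hrow : ∀ i, ∑ j, A i j ≤ b) (hcol : ∀ j, ∑ i, A i j ≤ b) :
    ∃ Y : Matrix ι ι 𝕜, (∀ i j, 0 ≤ Y i j) ∧
      (∀ i, ∑ j, (A i j + Y i j) = b) ∧ (∀ j, ∑ i, (A i j + Y i j) = b) := by
  set δ : ι → 𝕜 := fun i => b - ∑ j, A i j
  set ε : ι → 𝕜 := fun j => b - ∑ i, A i j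
  have hδ : 0 ≤ δ := fun i => sub_nonneg.mpr (hrow i)
  have hε : 0 ≤ ε := fun j => sub_nonneg.mpr (hcol j)
  have hsum : ∑ i, δ i = ∑ j, ε j := by
    simp only [δ, ε, sum_sub_distrib, sum_comm (f := fun i j => A i j)]
  refine ⟨productCoupling δ ε, productCoupling_nonneg hδ hε, fun i => ?_, fun j => ?_⟩
  · rw [sum_add_distrib, sum_productCoupling_row hδ hsum]
    exact add_sub_cancel _ _
  · rw [sum_add_distrib, sum_productCoupling_col hε hsum]
    exact add_sub_cancel _ _

theorem complete_to_balanced_heterogeneous_general (n : ℕ) (hn : 1 ≤ n)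
    (D : Matrix (Fin n) (Fin n) ℝ)
    (B : Fin n → ℝ) (hB : ∀ i, 0 < B i)
    (b : ℝ)
    (hb : b = max
      (Finset.univ.sup' (Finset.univ_nonempty_iff.mpr ⟨⟨0, hn⟩⟩) fun i => ∑ j, D i j / B i)
      (Finset.univ.sup' (Finset.univ_nonempty_iff.mpr ⟨⟨0, hn⟩⟩) fun j => ∑ i, D i j / B i)) :
    ∃ X : Matrix (Fin n) (Fin n) ℝ,
      (∀ i j, 0 ≤ X i j) ∧
      (∀ i, ∑ j, (D i j + X i j) / B i = b) ∧
      (∀ j, ∑ i, (D i j + X i j) / B i = b) := by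
  have hrow : ∀ i, ∑ j, D i j / B i ≤ b := fun i =>
    hb ▸ le_max_of_le_left (le_sup' (fun i => ∑ j, D i j / B i) (mem_univ i))
  have hcol : ∀ j, ∑ i, D i j / B i ≤ b := fun j =>
    hb ▸ le_max_of_le_right (le_sup' (fun j => ∑ i, D i j / B i) (mem_univ j))
  obtain ⟨Y, hY, hYrow, hYcol⟩ :=
    Matrix.exists_nonneg_add_sums_eq (fun i j => D i j / B i) hrow hcol
  have hscale : ∀ i j, (D i j + B i * Y i j) / B i = D i j / B i + Y i j := fun i j => by
    rw [add_div, mul_div_cancel_left₀ _ (hB i).ne']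
  refine ⟨fun i j => B i * Y i j, fun i j => mul_nonneg (hB i).le (hY i j),
    fun i => ?_, fun j => ?_⟩
  · simpa only [hscale] using hYrow i
  · simpa only [hscale] using hYcol j

theorem complete_to_balanced_heterogeneous (n : ℕ) (hn : 1 ≤ n)
    (D : Matrix (Fin n) (Fin n) ℝ) (hD : ∀ i j, 0 ≤ D i j)
    (B : Fin n → ℝ) (hB : ∀ i, 0 < B i)
    (b : ℝ)
    (hb : b = max
      (Finset.univ.sup' (Finset.univ_nonempty_iff.mpr ⟨⟨0, hn⟩⟩) fun i => ∑ j, D i j / B i)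
      (Finset.univ.sup' (Finset.univ_nonempty_iff.mpr ⟨⟨0, hn⟩⟩) fun j => ∑ i, D i j / B i)) :
    ∃ X : Matrix (Fin n) (Fin n) ℝ,
      (∀ i j, 0 ≤ X i j) ∧
      (∀ i, ∑ j, (D i j + X i j) / B i = b) ∧
      (∀ j, ∑ i, (D i j + X i j) / B i = b) :=
  complete_to_balanced_heterogeneous_general n hn D B hB b hb
end

section
/- Let n ≥ 1 and let a, b : Fin n → ℝ with a nondecreasing (a(i) ≤ a(j) whenever i ≤ j) and b nonincreasing (b(i) ≥ b(j) whenever i ≤ j). Then for every permutation σ of Fin n, max_{i} ( a(i) + b(i) ) ≤ max_{i} ( a(i) + b(σ(i)) ). (Theorem 6.2: sorting one vector ascending and the other descending and pairing them sequentially minimizes the maximum pairwise sum, i.e., colocating a popular expert of one model with an unpopular expert of the other minimizes the maximum aggregated per-GPU traffic.) -/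
open Finset

/-- If `σ` sent every `j ≥ i` strictly above `i`, it would inject `{j | i ≤ j}` into its proper
subset `{j | i < j}`. -/
theorem Equiv.Perm.exists_le_and_apply_le {α : Type*} [Fintype α] [LinearOrder α]
    (σ : Equiv.Perm α) (i : α) : ∃ j, i ≤ j ∧ σ j ≤ i := by
  by_contra! h
  have hmaps : Set.MapsTo σ {j | i ≤ j} {j | i < j} := fun j hj => h j hj
  have hssub : ({j | i < j} : Finset α) ⊂ ({j | i ≤ j} : Finset α) :=
    ssubset_iff_of_subset (monotone_filter_right _ fun _ _ => le_of_lt) |>.2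
      ⟨i, by simp, by simp⟩
  exact (card_le_card_of_injOn σ (by simpa using hmaps) σ.injective.injOn).not_gt
    (card_lt_card hssub)

/-- Each pair `a i + b i` is dominated by some pair `a j + b (σ j)` with `i ≤ j` and `σ j ≤ i`. -/
theorem sup'_add_le_sup'_add_comp_perm {α M : Type*} [Fintype α] [LinearOrder α]
    [SemilatticeSup M] [AddCommMonoid M] [IsOrderedAddMonoid M] {a b : α → M}
    (ha : Monotone a) (hb : Antitone b) (σ : Equiv.Perm α) (h : (univ : Finset α).Nonempty) :
    univ.sup' h (fun i => a i + b i) ≤ univ.sup' h (fun i => a i + b (σ i)) := by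
  refine sup'_le h _ fun i _ => ?_
  obtain ⟨j, hij, hσj⟩ := σ.exists_le_and_apply_le i
  exact (add_le_add (ha hij) (hb hσj)).trans (le_sup' (fun i => a i + b (σ i)) (mem_univ j))

theorem opposite_sorting_minimizes_max_pair_sum (n : ℕ) (hn : 1 ≤ n)
    (a b : Fin n → ℝ)
    (ha : ∀ i j : Fin n, i ≤ j → a i ≤ a j)
    (hb : ∀ i j : Fin n, i ≤ j → b j ≤ b i)
    (σ : Equiv.Perm (Fin n)) :
    (Finset.univ.sup' (Finset.univ_nonempty_iff.mpr ⟨⟨0, hn⟩⟩) fun i => a i + b i)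
      ≤ Finset.univ.sup' (Finset.univ_nonempty_iff.mpr ⟨⟨0, hn⟩⟩) fun i => a i + b (σ i) :=
  sup'_add_le_sup'_add_comp_perm (fun i j => ha i j) (fun i j => hb i j) σ _
end
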